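/- arXiv:2511.22808 — 4 statements merged into one kernel-verified Lean document; each statement's English description precedes it below -/
import Mathlib

section
/- The generating function identity ∑_{n≥0} p_{eu}^{od}(n) q^n = (∑_{n≥0} q^{n^2}) / ∏_{n≥1}(1 − q^{2n}) holds as an identity of formal power series. -/
def OddDistinctGtEven (M : Multiset ℕ) : Prop :=
  (M.filter (fun x => Odd x)).Nodup ∧
  ∀ o ∈ M, Odd o → ∀ e ∈ M, Even e → e < o

def EvenGtOddDistinct (M : Multiset ℕ) : Prop :=
  (M.filter (fun x => Odd x)).Nodup ∧
  ∀ e ∈ M, Even e → ∀ o ∈ M, Odd o → o < e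

/-- number of partitions of n with odd parts distinct and all greater than even parts -/
noncomputable def peuod (n : ℕ) : ℕ := Nat.card {p : n.Partition // OddDistinctGtEven p.parts}

/-- number of partitions of n with even parts all greater than the distinct odd parts -/
noncomputable def podeu (n : ℕ) : ℕ := Nat.card {p : n.Partition // EvenGtOddDistinct p.parts}

/-!
Take a partition of `n` with `k ≥ 1` distinct odd parts, all larger than its even parts, and let
`o` be its smallest odd part. Lowering the other odd parts by `2` and replacing `o` by the even
part `o - 1` (dropped when `o = 1`) gives a partition of `n - (2k - 1)` of the same kind with
`k - 1` odd parts, whose largest even part is `o - 1`. Conversely, turning the largest even part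
`e` (or `0` if there is none) into the odd part `e + 1` and raising the other odd parts by `2`
undoes this. Iterating, the partitions of `n` counted by `p_{eu}^{od}` with `k` odd parts are
equinumerous with the partitions of `n - k²` into even parts, whose generating function is
`1 / ∏ (1 - q^{2i})`.
-/

open Multiset

theorem Multiset.sup_mem_of_ne_zero {α : Type*} [LinearOrder α] [OrderBot α] {s : Multiset α}
    (hs : s ≠ 0) : s.sup ∈ s := by
  induction s using Multiset.induction_on with
  | empty => exact absurd rfl hs
  | cons a s ih =>
    rw [sup_cons]
    rcases eq_or_ne s 0 with rfl | hs'
    · simp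
    rcases le_total a s.sup with h | h
    · rw [sup_eq_right.2 h]; exact mem_cons_of_mem (ih hs')
    · rw [sup_eq_left.2 h]; exact mem_cons_self _ _

theorem Multiset.filter_odd_add_filter_even (M : Multiset ℕ) :
    M.filter Odd + M.filter Even = M := by
  conv_rhs => rw [← filter_add_not Odd M]
  simp only [Nat.not_odd_iff_even]

theorem Multiset.sum_map_add_const (s : Multiset ℕ) (c : ℕ) :
    (s.map (· + c)).sum = s.sum + card s * c := by
  simp [sum_map_add]

namespace Peuod

variable {M : Multiset ℕ}

def maxEvenPart (M : Multiset ℕ) : ℕ := (M.filter Even).sup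

noncomputable def minOddPart (M : Multiset ℕ) : ℕ := sInf {x | x ∈ M ∧ Odd x}

theorem le_maxEvenPart {x : ℕ} (hx : x ∈ M) (he : Even x) : x ≤ maxEvenPart M :=
  le_sup (mem_filter.2 ⟨hx, he⟩)

theorem maxEvenPart_eq_zero_or_mem : maxEvenPart M = 0 ∨ maxEvenPart M ∈ M.filter Even := by
  rcases eq_or_ne (M.filter Even) 0 with h | h
  · left; simp [maxEvenPart, h]
  · exact .inr (sup_mem_of_ne_zero h)

theorem even_maxEvenPart : Even (maxEvenPart M) := by
  rcases maxEvenPart_eq_zero_or_mem (M := M) with h | h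
  · simp [h]
  · exact (mem_filter.1 h).2

theorem maxEvenPart_lt {o : ℕ} (hM : OddDistinctGtEven M) (ho : o ∈ M) (hodd : Odd o) :
    maxEvenPart M < o := by
  rcases maxEvenPart_eq_zero_or_mem (M := M) with h | h
  · rw [h]; exact hodd.pos
  · exact hM.2 o ho hodd _ (mem_filter.1 h).1 (mem_filter.1 h).2

theorem sum_erase_maxEvenPart_add :
    ((M.filter Even).erase (maxEvenPart M)).sum + maxEvenPart M = (M.filter Even).sum := by
  rcases maxEvenPart_eq_zero_or_mem (M := M) with h | h
  · by_cases h0 : 0 ∈ M.filter Even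
    · rw [h, add_zero, ← sum_erase h0, zero_add]
    · rw [h, erase_of_notMem h0, add_zero]
  · rw [add_comm, sum_erase h]

theorem maxEvenPart_eq {a : ℕ} (ha : a = 0 ∨ a ∈ M.filter Even)
    (hmax : ∀ x ∈ M, Even x → x ≤ a) : maxEvenPart M = a := by
  refine le_antisymm (sup_le.2 fun x hx => hmax x (mem_filter.1 hx).1 (mem_filter.1 hx).2) ?_
  rcases ha with rfl | ha
  · exact Nat.zero_le _
  · exact le_sup ha

theorem minOddPart_mem_and_odd (h : ∃ x ∈ M, Odd x) : minOddPart M ∈ M ∧ Odd (minOddPart M) :=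
  Nat.sInf_mem (s := {x | x ∈ M ∧ Odd x}) h

theorem minOddPart_le {x : ℕ} (hx : x ∈ M) (hodd : Odd x) : minOddPart M ≤ x :=
  Nat.sInf_le ⟨hx, hodd⟩

theorem minOddPart_eq {a : ℕ} (ha : a ∈ M) (hodd : Odd a) (hmin : ∀ x ∈ M, Odd x → a ≤ x) :
    minOddPart M = a :=
  le_antisymm (minOddPart_le ha hodd) (le_csInf ⟨a, ha, hodd⟩ fun x hx => hmin x hx.1 hx.2)

def addOddPart (M : Multiset ℕ) : Multiset ℕ :=
  (maxEvenPart M + 1) ::ₘ ((M.filter Odd).map (· + 2) + (M.filter Even).erase (maxEvenPart M))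

theorem filter_odd_addOddPart :
    (addOddPart M).filter Odd = (maxEvenPart M + 1) ::ₘ (M.filter Odd).map (· + 2) := by
  have hodd : ∀ x ∈ M.filter Odd, Odd (x + 2) := fun x hx =>
    (mem_filter.1 hx).2.add_even even_two
  have heven : ∀ x ∈ (M.filter Even).erase (maxEvenPart M), ¬Odd x := fun x hx =>
    Nat.not_odd_iff_even.2 (mem_filter.1 (mem_of_mem_erase hx)).2
  rw [addOddPart, filter_cons_of_pos _ even_maxEvenPart.add_one, filter_add,
    filter_eq_self.2 (forall_mem_map_iff.2 hodd), filter_eq_nil.2 heven, add_zero]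

theorem filter_even_addOddPart :
    (addOddPart M).filter Even = (M.filter Even).erase (maxEvenPart M) := by
  have hodd : ∀ x ∈ M.filter Odd, ¬Even (x + 2) := fun x hx =>
    Nat.not_even_iff_odd.2 ((mem_filter.1 hx).2.add_even even_two)
  have heven : ∀ x ∈ (M.filter Even).erase (maxEvenPart M), Even x := fun x hx =>
    (mem_filter.1 (mem_of_mem_erase hx)).2
  rw [addOddPart, filter_cons_of_neg _ (Nat.not_even_iff_odd.2 even_maxEvenPart.add_one),
    filter_add, filter_eq_nil.2 (forall_mem_map_iff.2 hodd), filter_eq_self.2 heven, zero_add]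

theorem sum_addOddPart : (addOddPart M).sum = M.sum + 2 * card (M.filter Odd) + 1 := by
  have h := sum_erase_maxEvenPart_add (M := M)
  have hM := congrArg sum (filter_odd_add_filter_even M)
  rw [sum_add] at hM
  rw [addOddPart, sum_cons, sum_add, sum_map_add_const]
  omega

theorem card_filter_odd_addOddPart :
    card ((addOddPart M).filter Odd) = card (M.filter Odd) + 1 := by
  simp [filter_odd_addOddPart]

theorem pos_of_mem_addOddPart (hpos : ∀ x ∈ M, 0 < x) {x : ℕ} (hx : x ∈ addOddPart M) : 0 < x := by
  rcases mem_cons.1 hx with rfl | hx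
  · omega
  rcases mem_add.1 hx with hx | hx
  · obtain ⟨y, -, rfl⟩ := mem_map.1 hx; omega
  · exact hpos x (mem_of_mem_filter (mem_of_mem_erase hx))

theorem oddDistinctGtEven_addOddPart (hM : OddDistinctGtEven M) :
    OddDistinctGtEven (addOddPart M) := by
  have hgt : ∀ o ∈ M.filter Odd, maxEvenPart M < o := fun o ho =>
    maxEvenPart_lt hM (mem_filter.1 ho).1 (mem_filter.1 ho).2
  refine ⟨?_, fun o ho hodd e he heven => ?_⟩
  · rw [filter_odd_addOddPart, nodup_cons]
    refine ⟨fun h => ?_, hM.1.map (add_left_injective 2)⟩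
    obtain ⟨y, hy, hy2⟩ := mem_map.1 h
    have := hgt y hy
    omega
  · have he' : e ≤ maxEvenPart M := by
      have : e ∈ (addOddPart M).filter Even := mem_filter.2 ⟨he, heven⟩
      rw [filter_even_addOddPart] at this
      exact le_maxEvenPart (mem_of_mem_filter (mem_of_mem_erase this)) heven
    have : o ∈ (addOddPart M).filter Odd := mem_filter.2 ⟨ho, hodd⟩
    rw [filter_odd_addOddPart] at this
    rcases mem_cons.1 this with rfl | ho'
    · omega
    · obtain ⟨y, hy, rfl⟩ := mem_map.1 ho'
      have := hgt y hy
      omega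

theorem minOddPart_addOddPart (hM : OddDistinctGtEven M) :
    minOddPart (addOddPart M) = maxEvenPart M + 1 := by
  refine minOddPart_eq (mem_cons_self _ _) even_maxEvenPart.add_one fun x hx hodd => ?_
  have : x ∈ (addOddPart M).filter Odd := mem_filter.2 ⟨hx, hodd⟩
  rw [filter_odd_addOddPart] at this
  rcases mem_cons.1 this with rfl | hx'
  · rfl
  · obtain ⟨y, hy, rfl⟩ := mem_map.1 hx'
    have := maxEvenPart_lt hM (mem_filter.1 hy).1 (mem_filter.1 hy).2
    omega

noncomputable def removeOddPart (M : Multiset ℕ) : Multiset ℕ :=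
  ((M.filter Odd).erase (minOddPart M)).map (· - 2) + M.filter Even +
    if minOddPart M = 1 then 0 else {minOddPart M - 1}

theorem add_two_le_of_mem_erase_minOddPart (hM : OddDistinctGtEven M) {x : ℕ}
    (hx : x ∈ (M.filter Odd).erase (minOddPart M)) : minOddPart M + 2 ≤ x := by
  obtain ⟨hne, hx⟩ := (hM.1.mem_erase_iff).1 hx
  obtain ⟨hxM, hxodd⟩ := mem_filter.1 hx
  have hle := minOddPart_le hxM hxodd
  obtain ⟨-, a, ha⟩ := minOddPart_mem_and_odd ⟨x, hxM, hxodd⟩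
  obtain ⟨b, rfl⟩ := hxodd
  omega

theorem odd_sub_two_of_mem_erase_minOddPart (hM : OddDistinctGtEven M) {x : ℕ}
    (hx : x ∈ (M.filter Odd).erase (minOddPart M)) : Odd (x - 2) := by
  have := add_two_le_of_mem_erase_minOddPart hM hx
  obtain ⟨b, rfl⟩ := (mem_filter.1 (mem_of_mem_erase hx)).2
  exact ⟨b - 1, by omega⟩

theorem filter_odd_removeOddPart (hM : OddDistinctGtEven M) (hodd : ∃ x ∈ M, Odd x) :
    (removeOddPart M).filter Odd = ((M.filter Odd).erase (minOddPart M)).map (· - 2) := by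
  obtain ⟨-, a, ha⟩ := minOddPart_mem_and_odd hodd
  rw [removeOddPart, filter_add, filter_add,
    filter_eq_self.2 (forall_mem_map_iff.2 fun _ => odd_sub_two_of_mem_erase_minOddPart hM),
    filter_eq_nil.2 fun x hx => Nat.not_odd_iff_even.2 (mem_filter.1 hx).2]
  split_ifs with h
  · simp
  · rw [filter_singleton, if_neg (Nat.not_odd_iff_even.2 ⟨a, by omega⟩)]
    simp

theorem filter_even_removeOddPart (hM : OddDistinctGtEven M) (hodd : ∃ x ∈ M, Odd x) :
    (removeOddPart M).filter Even =
      M.filter Even + if minOddPart M = 1 then 0 else {minOddPart M - 1} := by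
  obtain ⟨-, a, ha⟩ := minOddPart_mem_and_odd hodd
  rw [removeOddPart, filter_add, filter_add,
    filter_eq_nil.2 (forall_mem_map_iff.2 fun _ hx =>
      Nat.not_even_iff_odd.2 (odd_sub_two_of_mem_erase_minOddPart hM hx)),
    filter_eq_self.2 fun x hx => (mem_filter.1 hx).2, zero_add]
  split_ifs with h
  · simp
  · rw [filter_singleton, if_pos ⟨a, by omega⟩]

theorem card_filter_odd_removeOddPart (hM : OddDistinctGtEven M) (hodd : ∃ x ∈ M, Odd x) :
    card ((removeOddPart M).filter Odd) + 1 = card (M.filter Odd) := by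
  obtain ⟨hmem, hodd'⟩ := minOddPart_mem_and_odd hodd
  rw [filter_odd_removeOddPart hM hodd, card_map, card_erase_add_one (mem_filter.2 ⟨hmem, hodd'⟩)]

theorem map_add_two_map_sub_two (hM : OddDistinctGtEven M) :
    (((M.filter Odd).erase (minOddPart M)).map (· - 2)).map (· + 2) =
      (M.filter Odd).erase (minOddPart M) := by
  rw [map_map]
  refine (map_congr rfl fun x hx => ?_).trans (map_id _)
  have := add_two_le_of_mem_erase_minOddPart hM hx
  simp only [Function.comp_apply, id_eq]
  omega

theorem sum_removeOddPart (hM : OddDistinctGtEven M) (hodd : ∃ x ∈ M, Odd x) :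
    (removeOddPart M).sum + 2 * card (M.filter Odd) = M.sum + 1 := by
  obtain ⟨hmem, hoddo⟩ := minOddPart_mem_and_odd hodd
  have hodds := sum_erase (mem_filter.2 ⟨hmem, hoddo⟩)
  have := hoddo.pos
  have hshift := congrArg sum (map_add_two_map_sub_two hM)
  have hcard := card_filter_odd_removeOddPart hM hodd
  have hM' := congrArg sum (filter_odd_add_filter_even M)
  rw [sum_map_add_const, card_map] at hshift
  rw [filter_odd_removeOddPart hM hodd, card_map] at hcard
  rw [sum_add] at hM'
  have hlast : (if minOddPart M = 1 then 0 else {minOddPart M - 1} : Multiset ℕ).sum =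
      minOddPart M - 1 := by
    split_ifs with h <;> simp [h]
  rw [removeOddPart, sum_add, sum_add, hlast]
  omega

theorem pos_of_mem_removeOddPart (hM : OddDistinctGtEven M) (hodd : ∃ x ∈ M, Odd x)
    (hpos : ∀ x ∈ M, 0 < x) {x : ℕ} (hx : x ∈ removeOddPart M) : 0 < x := by
  have := (minOddPart_mem_and_odd hodd).2.pos
  rcases mem_add.1 hx with hx | hx
  · rcases mem_add.1 hx with hx | hx
    · obtain ⟨y, hy, rfl⟩ := mem_map.1 hx
      have := add_two_le_of_mem_erase_minOddPart hM hy
      omega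
    · exact hpos x (mem_of_mem_filter hx)
  · split_ifs at hx with h
    · simp at hx
    · rw [mem_singleton.1 hx]; omega

theorem le_minOddPart_sub_one_of_even_mem_removeOddPart (hM : OddDistinctGtEven M)
    (hodd : ∃ x ∈ M, Odd x) {e : ℕ} (he : e ∈ removeOddPart M) (heven : Even e) :
    e ≤ minOddPart M - 1 := by
  obtain ⟨hmem, hoddo⟩ := minOddPart_mem_and_odd hodd
  replace he : e ∈ (removeOddPart M).filter Even := mem_filter.2 ⟨he, heven⟩
  rw [filter_even_removeOddPart hM hodd, mem_add] at he
  rcases he with he | he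
  · have := hM.2 _ hmem hoddo e (mem_filter.1 he).1 (mem_filter.1 he).2
    omega
  · split_ifs at he with h
    · simp at he
    · exact (mem_singleton.1 he).le

theorem oddDistinctGtEven_removeOddPart (hM : OddDistinctGtEven M) (hodd : ∃ x ∈ M, Odd x) :
    OddDistinctGtEven (removeOddPart M) := by
  have hoddo := (minOddPart_mem_and_odd hodd).2
  refine ⟨?_, fun o ho ho' e he he' => ?_⟩
  · rw [filter_odd_removeOddPart hM hodd]
    refine (hM.1.erase _).map_on fun x hx y hy hxy => ?_
    have := add_two_le_of_mem_erase_minOddPart hM hx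
    have := add_two_le_of_mem_erase_minOddPart hM hy
    omega
  · have hle := le_minOddPart_sub_one_of_even_mem_removeOddPart hM hodd he he'
    have : o ∈ (removeOddPart M).filter Odd := mem_filter.2 ⟨ho, ho'⟩
    rw [filter_odd_removeOddPart hM hodd] at this
    obtain ⟨y, hy, rfl⟩ := mem_map.1 this
    have := add_two_le_of_mem_erase_minOddPart hM hy
    have := hoddo.pos
    omega

theorem maxEvenPart_removeOddPart (hM : OddDistinctGtEven M) (hodd : ∃ x ∈ M, Odd x) :
    maxEvenPart (removeOddPart M) = minOddPart M - 1 := by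
  refine maxEvenPart_eq ?_ fun _ => le_minOddPart_sub_one_of_even_mem_removeOddPart hM hodd
  by_cases h : minOddPart M = 1
  · exact .inl (by omega)
  · right
    rw [filter_even_removeOddPart hM hodd, if_neg h]
    exact mem_add.2 (.inr (mem_singleton_self _))

theorem removeOddPart_addOddPart (hM : OddDistinctGtEven M) (hpos : ∀ x ∈ M, 0 < x) :
    removeOddPart (addOddPart M) = M := by
  have hzero : 0 ∉ M.filter Even := fun h => (hpos 0 (mem_of_mem_filter h)).false
  have hevens : (M.filter Even).erase (maxEvenPart M) +
      (if maxEvenPart M + 1 = 1 then 0 else {maxEvenPart M + 1 - 1}) = M.filter Even := by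
    rcases maxEvenPart_eq_zero_or_mem (M := M) with h | h
    · rw [h, erase_of_notMem hzero, if_pos rfl, add_zero]
    · have h0 : maxEvenPart M ≠ 0 := fun h0 => hzero (h0 ▸ h)
      rw [if_neg (by omega), Nat.add_sub_cancel, add_comm, singleton_add, cons_erase h]
  rw [removeOddPart, minOddPart_addOddPart hM, filter_odd_addOddPart, filter_even_addOddPart,
    erase_cons_head, map_map, add_assoc, hevens]
  conv_rhs => rw [← filter_odd_add_filter_even M]
  congr 1
  exact (Multiset.map_congr rfl fun x _ => by simp).trans (map_id _)

theorem addOddPart_removeOddPart (hM : OddDistinctGtEven M) (hodd : ∃ x ∈ M, Odd x)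
    (hpos : ∀ x ∈ M, 0 < x) : addOddPart (removeOddPart M) = M := by
  obtain ⟨hmem, hoddo⟩ := minOddPart_mem_and_odd hodd
  have hzero : 0 ∉ M.filter Even := fun h => (hpos 0 (mem_of_mem_filter h)).false
  have hevens : (M.filter Even + if minOddPart M = 1 then 0 else {minOddPart M - 1}).erase
      (minOddPart M - 1) = M.filter Even := by
    split_ifs with h
    · rw [h, add_zero, Nat.sub_self, erase_of_notMem hzero]
    · rw [add_comm, singleton_add, erase_cons_head]
  rw [addOddPart, maxEvenPart_removeOddPart hM hodd, filter_odd_removeOddPart hM hodd,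
    map_add_two_map_sub_two hM, filter_even_removeOddPart hM hodd, hevens,
    Nat.sub_add_cancel hoddo.pos, ← cons_add, cons_erase (mem_filter.2 ⟨hmem, hoddo⟩),
    filter_odd_add_filter_even]

def OddDistinctGtEvenPartition (m k : ℕ) : Type :=
  {p : m.Partition // OddDistinctGtEven p.parts ∧ card (p.parts.filter Odd) = k}

theorem exists_odd_of_card_filter_odd_eq_succ {k : ℕ}
    (h : card (M.filter Odd) = k + 1) : ∃ x ∈ M, Odd x := by
  obtain ⟨x, hx⟩ := card_pos_iff_exists_mem.1 (by omega : 0 < card (M.filter Odd))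
  exact ⟨x, mem_filter.1 hx⟩

noncomputable def addOddPartEquiv (m k : ℕ) :
    OddDistinctGtEvenPartition m k ≃ OddDistinctGtEvenPartition (m + 2 * k + 1) (k + 1) where
  toFun p :=
    ⟨⟨addOddPart p.1.parts, pos_of_mem_addOddPart fun _ => p.1.parts_pos, by
        rw [sum_addOddPart, p.1.parts_sum, p.2.2]⟩,
      oddDistinctGtEven_addOddPart p.2.1, by rw [card_filter_odd_addOddPart, p.2.2]⟩
  invFun q :=
    have hodd := exists_odd_of_card_filter_odd_eq_succ q.2.2
    ⟨⟨removeOddPart q.1.parts, pos_of_mem_removeOddPart q.2.1 hodd fun _ => q.1.parts_pos, by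
        have := sum_removeOddPart q.2.1 hodd
        rw [q.1.parts_sum, q.2.2] at this
        omega⟩,
      oddDistinctGtEven_removeOddPart q.2.1 hodd,
        Nat.add_right_cancel ((card_filter_odd_removeOddPart q.2.1 hodd).trans q.2.2)⟩
  left_inv p := Subtype.ext <| Nat.Partition.ext <|
    removeOddPart_addOddPart p.2.1 fun _ => p.1.parts_pos
  right_inv q := Subtype.ext <| Nat.Partition.ext <|
    addOddPart_removeOddPart q.2.1 (exists_odd_of_card_filter_odd_eq_succ q.2.2)
      fun _ => q.1.parts_pos

theorem isEmpty_oddDistinctGtEvenPartition {m k : ℕ} (hm : m < 2 * k + 1) :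
    IsEmpty (OddDistinctGtEvenPartition m (k + 1)) := by
  refine ⟨fun q => ?_⟩
  have := sum_removeOddPart q.2.1 (exists_odd_of_card_filter_odd_eq_succ q.2.2)
  rw [q.1.parts_sum, q.2.2] at this
  omega

theorem card_filter_odd_eq_zero_iff : card (M.filter Odd) = 0 ↔ ∀ x ∈ M, Even x := by
  simp [filter_eq_nil]

theorem oddDistinctGtEven_of_forall_even (h : ∀ x ∈ M, Even x) :
    OddDistinctGtEven M := by
  have h0 : M.filter Odd = 0 := card_eq_zero.1 (card_filter_odd_eq_zero_iff.2 h)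
  exact ⟨h0 ▸ nodup_zero, fun o ho hodd => absurd (h o ho) (Nat.not_even_iff_odd.2 hodd)⟩

theorem card_oddDistinctGtEvenPartition_zero (m : ℕ) :
    Nat.card (OddDistinctGtEvenPartition m 0) =
      Nat.card {p : m.Partition // ∀ i ∈ p.parts, Even i} :=
  Nat.card_congr <| Equiv.subtypeEquivRight fun _ =>
    ⟨fun h => card_filter_odd_eq_zero_iff.1 h.2,
      fun h => ⟨oddDistinctGtEven_of_forall_even h, card_filter_odd_eq_zero_iff.2 h⟩⟩

theorem card_oddDistinctGtEvenPartition (m k : ℕ) :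
    Nat.card (OddDistinctGtEvenPartition m k) =
      if k ^ 2 ≤ m then Nat.card {p : (m - k ^ 2).Partition // ∀ i ∈ p.parts, Even i} else 0 := by
  induction k generalizing m with
  | zero => simp [card_oddDistinctGtEvenPartition_zero]
  | succ k ih =>
    have hsq : (k + 1) ^ 2 = k ^ 2 + 2 * k + 1 := by ring
    rcases lt_or_ge m (2 * k + 1) with hm | hm
    · have := isEmpty_oddDistinctGtEvenPartition hm
      rw [Nat.card_of_isEmpty, if_neg (by omega)]
    · obtain ⟨m, rfl⟩ : ∃ m', m = m' + 2 * k + 1 := ⟨m - (2 * k + 1), by omega⟩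
      rw [← Nat.card_congr (addOddPartEquiv m k), ih, hsq,
        show m + 2 * k + 1 - (k ^ 2 + 2 * k + 1) = m - k ^ 2 by omega]
      simp only [add_le_add_iff_right]

theorem card_filter_odd_parts_le {m : ℕ} (p : m.Partition) : card (p.parts.filter Odd) ≤ m := by
  calc card (p.parts.filter Odd) ≤ card p.parts := card_le_card (filter_le _ _)
    _ ≤ m := by
      simpa [p.parts_sum] using card_nsmul_le_sum (s := p.parts) (a := 1) fun _ => p.parts_pos

theorem peuod_eq_sum_card {m N : ℕ} (hm : m < N) :
    peuod m = ∑ k ∈ Finset.range N, Nat.card (OddDistinctGtEvenPartition m k) := by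
  classical
  rw [peuod, Nat.card_eq_fintype_card, Fintype.card_subtype,
    Finset.card_eq_sum_card_fiberwise (f := fun p => card (p.parts.filter Odd))
      fun p _ => Finset.mem_range.2 ((card_filter_odd_parts_le p).trans_lt hm)]
  refine Finset.sum_congr rfl fun k _ => ?_
  rw [OddDistinctGtEvenPartition, Nat.card_eq_fintype_card, Fintype.card_subtype,
    Finset.filter_filter]

theorem peuod_eq_sum_card_even {m N : ℕ} (hm : m < N) :
    peuod m = ∑ k ∈ Finset.range N,
      if k ^ 2 ≤ m then Nat.card {p : (m - k ^ 2).Partition // ∀ i ∈ p.parts, Even i} else 0 := by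
  rw [peuod_eq_sum_card hm]
  exact Finset.sum_congr rfl fun k _ => card_oddDistinctGtEvenPartition m k

end Peuod

namespace Nat.Partition

open PowerSeries

theorem card_subtype_mem_parts_and_forall {m a : ℕ} (P : ℕ → Prop) (ha0 : 0 < a) (ha : a ≤ m)
    (hPa : P a) :
    Nat.card {p : m.Partition // a ∈ p.parts ∧ ∀ i ∈ p.parts, P i} =
      Nat.card {q : (m - a).Partition // ∀ i ∈ q.parts, P i} :=
  Nat.card_congr <| (Equiv.subtypeSubtypeEquivSubtypeInter _ _).symm.trans <|
    (partitionWithPartEquiv ha0 ha).subtypeEquiv fun p => by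
      rw [partitionWithPartEquiv_apply_parts]
      conv_lhs => rw [← Multiset.cons_erase p.2]
      simp [hPa]

theorem card_subtype_forall_mem_insert {a : ℕ} {s : Finset ℕ} (ha : a ∉ s) (ha0 : 0 < a) (m : ℕ) :
    Nat.card {p : m.Partition // ∀ i ∈ p.parts, i ∈ insert a s} =
      Nat.card {p : m.Partition // ∀ i ∈ p.parts, i ∈ s} +
        if a ≤ m then Nat.card {q : (m - a).Partition // ∀ i ∈ q.parts, i ∈ insert a s} else 0 := by
  let Q : m.Partition → Prop := fun p => ∀ i ∈ p.parts, i ∈ insert a s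
  have hwithout : Nat.card {p : {p // Q p} // a ∉ p.1.parts} =
      Nat.card {p : m.Partition // ∀ i ∈ p.parts, i ∈ s} :=
    Nat.card_congr <| (Equiv.subtypeSubtypeEquivSubtypeInter Q _).trans <|
      Equiv.subtypeEquivRight (q := fun p : m.Partition => ∀ i ∈ p.parts, i ∈ s) fun p => by
        simp only [Q, Finset.mem_insert]
        exact ⟨fun ⟨h, ha'⟩ i hi => (h i hi).resolve_left (by rintro rfl; exact ha' hi),
          fun h => ⟨fun i hi => .inr (h i hi), fun hi => ha (h a hi)⟩⟩
  have hwith : Nat.card {p : {p // Q p} // a ∈ p.1.parts} =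
      if a ≤ m then Nat.card {q : (m - a).Partition // ∀ i ∈ q.parts, i ∈ insert a s} else 0 := by
    split_ifs with ham
    · rw [← card_subtype_mem_parts_and_forall _ ha0 ham (s.mem_insert_self a)]
      exact Nat.card_congr <|
        (Equiv.subtypeSubtypeEquivSubtypeInter Q fun p => a ∈ p.parts).trans <|
        Equiv.subtypeEquivRight fun _ => and_comm
    · have : IsEmpty {p : {p // Q p} // a ∈ p.1.parts} := ⟨fun p => ham (le_of_mem_parts p.2)⟩
      exact Nat.card_of_isEmpty
  rw [← hwithout, ← hwith, add_comm, ← Nat.card_sum]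
  exact Nat.card_congr (Equiv.sumCompl _).symm

theorem card_subtype_forall_mem_empty (m : ℕ) :
    Nat.card {p : m.Partition // ∀ i ∈ p.parts, i ∈ (∅ : Finset ℕ)} = if m = 0 then 1 else 0 := by
  split_ifs with hm
  · subst hm
    rw [Nat.card_congr (Equiv.subtypeUnivEquiv fun p => by simp), Nat.card_unique]
  · refine @Nat.card_of_isEmpty _ ⟨fun p => ?_⟩
    obtain ⟨i, hi⟩ := Multiset.exists_mem_of_ne_zero (s := p.1.parts) fun h =>
      hm (by rw [← p.1.parts_sum, h, Multiset.sum_zero])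
    simpa using p.2 i hi

theorem mk_card_mul_prod_one_sub_X_pow (R : Type*) [CommRing R] (s : Finset ℕ) (hs : 0 ∉ s) :
    PowerSeries.mk (fun m => (Nat.card {p : m.Partition // ∀ i ∈ p.parts, i ∈ s} : R)) *
      ∏ i ∈ s, (1 - X ^ i) = 1 := by
  induction s using Finset.induction_on with
  | empty =>
    rw [Finset.prod_empty, mul_one]
    ext m
    rw [coeff_mk, card_subtype_forall_mem_empty, coeff_one]
    split_ifs <;> simp
  | insert a s ha ih =>
    rw [Finset.mem_insert, not_or] at hs
    rw [Finset.prod_insert ha, ← mul_assoc]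
    refine (congrArg (· * _) ?_).trans (ih hs.2)
    ext m
    rw [mul_sub, mul_one, map_sub, coeff_mul_X_pow', coeff_mk, coeff_mk,
      card_subtype_forall_mem_insert ha (Nat.pos_of_ne_zero (Ne.symm hs.1))]
    split_ifs <;> simp

theorem card_forall_even_eq_card_forall_mem_image {j n : ℕ} (hj : j ≤ n) :
    Nat.card {p : j.Partition // ∀ i ∈ p.parts, Even i} =
      Nat.card {p : j.Partition // ∀ i ∈ p.parts, i ∈ (Finset.Icc 1 n).image (2 * ·)} :=
  Nat.card_congr <| Equiv.subtypeEquivRight fun p => forall₂_congr fun i hi => by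
    have := p.parts_pos hi
    have := p.le_of_mem_parts hi
    simp only [Finset.mem_image, Finset.mem_Icc, even_iff_two_dvd, dvd_iff_exists_eq_mul_right]
    constructor
    · rintro ⟨c, rfl⟩; exact ⟨c, by omega, rfl⟩
    · rintro ⟨c, -, rfl⟩; exact ⟨c, rfl⟩

end Nat.Partition

open PowerSeries Peuod Nat.Partition

theorem peuod_genfun :
    ∀ n : ℕ,
      PowerSeries.coeff (R := ℤ) n ((PowerSeries.mk fun m => (peuod m : ℤ)) *
        ∏ i ∈ Finset.Icc 1 n, (1 - PowerSeries.X ^ (2 * i))) =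
      PowerSeries.coeff (R := ℤ) n (∑ k ∈ Finset.range (n + 1), PowerSeries.X ^ (k ^ 2)) := by
  intro n
  set S := (Finset.Icc 1 n).image (2 * ·)
  set G : PowerSeries ℤ := mk fun m => Nat.card {p : m.Partition // ∀ i ∈ p.parts, i ∈ S}
  set θ : PowerSeries ℤ := ∑ k ∈ Finset.range (n + 1), X ^ (k ^ 2)
  have hG : G * ∏ i ∈ Finset.Icc 1 n, (1 - X ^ (2 * i)) = 1 := by
    have := mk_card_mul_prod_one_sub_X_pow ℤ S (by simp [S])
    rwa [Finset.prod_image fun _ _ _ _ h => by omega] at this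
  have htrunc : trunc (n + 1) (mk fun m => (peuod m : ℤ)) = trunc (n + 1) (θ * G) := by
    ext m
    rw [coeff_trunc, coeff_trunc]
    split_ifs with hm
    · rw [coeff_mk, peuod_eq_sum_card_even hm, Finset.sum_mul, map_sum, Nat.cast_sum]
      refine Finset.sum_congr rfl fun k _ => ?_
      rw [coeff_X_pow_mul', coeff_mk]
      split_ifs
      · rw [card_forall_even_eq_card_forall_mem_image (n := n) (by omega)]
      · rfl
    · rfl
  rw [coeff_mul_eq_coeff_trunc_mul_trunc _ _ (lt_add_one n), htrunc,
    ← coeff_mul_eq_coeff_trunc_mul_trunc _ _ (lt_add_one n), mul_assoc, hG, mul_one]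
end

section
/- For every n, the map sending a partition λ = (λ_1^e,…,λ_s^e, λ_1^o,…,λ_s^o) with s = t ≥ 2 (even parts λ_i^e all greater than odd parts λ_j^o, odd parts distinct, equal numbers s of even and odd parts) to μ = (λ_1^e+(2s−3), λ_2^e+(2s−5), …, λ_{s−1}^e+1, λ_s^e−1, λ_1^o−(2s−3), λ_2^o−(2s−5), …, λ_{s−1}^o−1, λ_s^o+1) is a bijection from the set of such λ of size n onto the set of partitions μ of n counted by p_{eu}^{od} with exactly s odd parts and s even parts satisfying μ_s^o − μ_1^e ≥ 2s−3 (odd parts of μ distinct and all greater than its even parts). -/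
lemma gap_lemma {s : ℕ} (f : Fin s → ℕ)
    (h : ∀ i j : Fin s, (i:ℕ) < (j:ℕ) → f j + 2 ≤ f i) :
    ∀ i j : Fin s, (i:ℕ) ≤ (j:ℕ) → f j + 2 * ((j:ℕ) - (i:ℕ)) ≤ f i := by
  have key : ∀ k, ∀ i j : Fin s, (j:ℕ) = (i:ℕ) + k → f j + 2 * k ≤ f i := by
    intro k
    induction k with
    | zero =>
      intro i j hj
      have : i = j := Fin.ext (by omega)
      subst this; omega
    | succ k ih =>
      intro i j hj
      have hi1 : (i:ℕ) + 1 < s := by omega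
      have h1 := h i ⟨(i:ℕ)+1, hi1⟩ (by simp)
      have h2 := ih ⟨(i:ℕ)+1, hi1⟩ j (by simp; omega)
      omega
  intro i j hij
  have := key ((j:ℕ) - (i:ℕ)) i j (by omega)
  omega

lemma odd_gap {s : ℕ} {f : Fin s → ℕ} (hS : StrictAnti f) (hO : ∀ i, Odd (f i)) :
    ∀ i j : Fin s, (i:ℕ) ≤ (j:ℕ) → f j + 2 * ((j:ℕ) - (i:ℕ)) ≤ f i := by
  apply gap_lemma
  intro i j hij
  have h1 := hS (show i < j from hij)
  obtain ⟨a, ha⟩ := hO i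
  obtain ⟨b, hb⟩ := hO j
  omega

theorem case_two_bijection (n s : ℕ) (hs : 2 ≤ s) :
    Set.BijOn
      (fun eo : (Fin s → ℕ) × (Fin s → ℕ) =>
        ((fun i => if (i : ℕ) < s - 1 then eo.1 i + (2 * (s - 1 - (i : ℕ)) - 1)
                   else eo.1 i - 1,
          fun i => if (i : ℕ) < s - 1 then eo.2 i - (2 * (s - 1 - (i : ℕ)) - 1)
                   else eo.2 i + 1) : (Fin s → ℕ) × (Fin s → ℕ)))
      {eo : (Fin s → ℕ) × (Fin s → ℕ) |
        Antitone eo.1 ∧ StrictAnti eo.2 ∧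
        (∀ i, Even (eo.1 i)) ∧ (∀ i, Odd (eo.2 i)) ∧
        (∀ i j, eo.2 j < eo.1 i) ∧ (∀ i, 0 < eo.2 i) ∧
        (∑ i, eo.1 i) + (∑ i, eo.2 i) = n}
      {oe : (Fin s → ℕ) × (Fin s → ℕ) |
        StrictAnti oe.1 ∧ Antitone oe.2 ∧
        (∀ i, Odd (oe.1 i)) ∧ (∀ i, Even (oe.2 i)) ∧
        (∀ i j, oe.2 j < oe.1 i) ∧ (∀ i, 0 < oe.2 i) ∧
        (∑ i, oe.1 i) + (∑ i, oe.2 i) = n ∧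
        oe.2 ⟨0, by omega⟩ + (2 * s - 3) ≤ oe.1 ⟨s - 1, by omega⟩} := by
  have hlst : s - 1 < s := by omega
  have hfz : 0 < s := by omega
  refine ⟨?_, ?_, ?_⟩
  · -- MapsTo
    intro p hp
    obtain ⟨hAe, hSo, hEe, hOo, hlt, hpos, hsum⟩ := hp
    have hogap := odd_gap hSo hOo
    have hoge : ∀ i : Fin s, 2 * (s - 1 - (i:ℕ)) - 1 < p.2 i := by
      intro i
      have h1 : p.2 ⟨s-1, hlst⟩ + 2 * ((s-1) - (i:ℕ)) ≤ p.2 i :=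
        hogap i ⟨s-1, hlst⟩ (show (i:ℕ) ≤ s - 1 by have := i.isLt; omega)
      have h2 := hpos ⟨s-1, hlst⟩
      omega
    have he2 : ∀ i : Fin s, 2 ≤ p.1 i := by
      intro i
      have h1 := hlt i i
      have h2 := hpos i
      omega
    have hkey : ∀ i j : Fin s, ¬ (i:ℕ) < s - 1 → ¬ (j:ℕ) < s - 1 →
        p.2 j + 1 < p.1 i - 1 := by
      intro i j hi hj
      have hi' : i = ⟨s-1, hlst⟩ := Fin.ext (show (i:ℕ) = s - 1 by have := i.isLt; omega)
      have hj' : j = ⟨s-1, hlst⟩ := Fin.ext (show (j:ℕ) = s - 1 by have := j.isLt; omega)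
      subst hi'; subst hj'
      have g1 : p.2 ⟨s-1, hlst⟩ + 2 * ((s-1) - 0) ≤ p.2 ⟨0, hfz⟩ :=
        hogap ⟨0, hfz⟩ ⟨s-1, hlst⟩ (show (0:ℕ) ≤ s - 1 by omega)
      have g2 := hlt ⟨s-1, hlst⟩ ⟨0, hfz⟩
      omega
    refine ⟨?_, ?_, ?_, ?_, ?_, ?_, ?_, ?_⟩
    · -- StrictAnti odd parts
      intro i j hij
      have hij' : (i:ℕ) < (j:ℕ) := hij
      have hA : p.1 j ≤ p.1 i := hAe (le_of_lt hij)
      have h2i := he2 i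
      have h2j := he2 j
      have hjlt := j.isLt
      show (if (j:ℕ) < s - 1 then p.1 j + (2 * (s - 1 - (j:ℕ)) - 1) else p.1 j - 1)
          < (if (i:ℕ) < s - 1 then p.1 i + (2 * (s - 1 - (i:ℕ)) - 1) else p.1 i - 1)
      split_ifs <;> omega
    · -- Antitone even parts
      intro i j hij
      have hij' : (i:ℕ) ≤ (j:ℕ) := hij
      have hg := hogap i j hij'
      have h1 := hoge i
      have h2 := hoge j
      have h3 := hpos j
      have hjlt := j.isLt
      show (if (j:ℕ) < s - 1 then p.2 j - (2 * (s - 1 - (j:ℕ)) - 1) else p.2 j + 1)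
          ≤ (if (i:ℕ) < s - 1 then p.2 i - (2 * (s - 1 - (i:ℕ)) - 1) else p.2 i + 1)
      split_ifs <;> omega
    · -- Odd
      intro i
      show Odd (if (i:ℕ) < s - 1 then p.1 i + (2 * (s - 1 - (i:ℕ)) - 1) else p.1 i - 1)
      by_cases h : (i:ℕ) < s - 1
      · rw [if_pos h]
        obtain ⟨a, ha⟩ := hEe i
        exact ⟨a + (s - 1 - (i:ℕ)) - 1, by omega⟩
      · rw [if_neg h]
        obtain ⟨a, ha⟩ := hEe i
        have := he2 i
        exact ⟨a - 1, by omega⟩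
    · -- Even
      intro i
      show Even (if (i:ℕ) < s - 1 then p.2 i - (2 * (s - 1 - (i:ℕ)) - 1) else p.2 i + 1)
      by_cases h : (i:ℕ) < s - 1
      · rw [if_pos h]
        obtain ⟨b, hb⟩ := hOo i
        have := hoge i
        exact ⟨b + 1 - (s - 1 - (i:ℕ)), by omega⟩
      · rw [if_neg h]
        obtain ⟨b, hb⟩ := hOo i
        exact ⟨b + 1, by omega⟩
    · -- even parts < odd parts
      intro i j
      have h1 := hlt i j
      have h2 := hpos j
      show (if (j:ℕ) < s - 1 then p.2 j - (2 * (s - 1 - (j:ℕ)) - 1) else p.2 j + 1)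
          < (if (i:ℕ) < s - 1 then p.1 i + (2 * (s - 1 - (i:ℕ)) - 1) else p.1 i - 1)
      split_ifs with hj hi hi
      · omega
      · omega
      · omega
      · exact hkey i j hi hj
    · -- positivity
      intro i
      show 0 < (if (i:ℕ) < s - 1 then p.2 i - (2 * (s - 1 - (i:ℕ)) - 1) else p.2 i + 1)
      split_ifs with h
      · have := hoge i; omega
      · omega
    · -- sum
      have hpt : ∀ i : Fin s,
          (if (i:ℕ) < s - 1 then p.1 i + (2 * (s - 1 - (i:ℕ)) - 1) else p.1 i - 1) +
          (if (i:ℕ) < s - 1 then p.2 i - (2 * (s - 1 - (i:ℕ)) - 1) else p.2 i + 1)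
          = p.1 i + p.2 i := by
        intro i
        by_cases h : (i:ℕ) < s - 1
        · rw [if_pos h, if_pos h]
          have := hoge i
          omega
        · rw [if_neg h, if_neg h]
          have := he2 i
          omega
      show (∑ i : Fin s, if (i:ℕ) < s - 1 then p.1 i + (2 * (s - 1 - (i:ℕ)) - 1) else p.1 i - 1)
          + (∑ i : Fin s, if (i:ℕ) < s - 1 then p.2 i - (2 * (s - 1 - (i:ℕ)) - 1) else p.2 i + 1)
          = n
      rw [← Finset.sum_add_distrib]
      simp only [hpt]
      rw [Finset.sum_add_distrib]
      exact hsum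
    · -- final inequality
      show (if (0:ℕ) < s - 1 then p.2 ⟨0, hfz⟩ - (2 * (s - 1 - 0) - 1) else p.2 ⟨0, hfz⟩ + 1)
            + (2 * s - 3) ≤
          (if s - 1 < s - 1 then p.1 ⟨s-1, hlst⟩ + (2 * (s - 1 - (s-1)) - 1)
           else p.1 ⟨s-1, hlst⟩ - 1)
      rw [if_pos (show (0:ℕ) < s - 1 by omega), if_neg (show ¬ (s - 1 < s - 1) by omega)]
      have h1 : 2 * (s - 1 - 0) - 1 < p.2 ⟨0, hfz⟩ := hoge ⟨0, hfz⟩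
      have h2 := hlt ⟨s-1, hlst⟩ ⟨0, hfz⟩
      omega
  · -- InjOn
    intro a ha b hb heq
    obtain ⟨hAe, hSo, hEe, hOo, hlt, hpos, hsum⟩ := ha
    obtain ⟨hAe', hSo', hEe', hOo', hlt', hpos', hsum'⟩ := hb
    have hogap := odd_gap hSo hOo
    have hogap' := odd_gap hSo' hOo'
    have hoge : ∀ i : Fin s, 2 * (s - 1 - (i:ℕ)) - 1 < a.2 i := by
      intro i
      have h1 : a.2 ⟨s-1, hlst⟩ + 2 * ((s-1) - (i:ℕ)) ≤ a.2 i :=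
        hogap i ⟨s-1, hlst⟩ (show (i:ℕ) ≤ s - 1 by have := i.isLt; omega)
      have h2 := hpos ⟨s-1, hlst⟩
      omega
    have hoge' : ∀ i : Fin s, 2 * (s - 1 - (i:ℕ)) - 1 < b.2 i := by
      intro i
      have h1 : b.2 ⟨s-1, hlst⟩ + 2 * ((s-1) - (i:ℕ)) ≤ b.2 i :=
        hogap' i ⟨s-1, hlst⟩ (show (i:ℕ) ≤ s - 1 by have := i.isLt; omega)
      have h2 := hpos' ⟨s-1, hlst⟩
      omega
    have he1 : ∀ i : Fin s, 1 ≤ a.1 i := by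
      intro i; have h1 := hlt i i; have h2 := hpos i; omega
    have he1' : ∀ i : Fin s, 1 ≤ b.1 i := by
      intro i; have h1 := hlt' i i; have h2 := hpos' i; omega
    have hfst : a.1 = b.1 := by
      funext i
      have h : (if (i:ℕ) < s - 1 then a.1 i + (2 * (s - 1 - (i:ℕ)) - 1) else a.1 i - 1)
             = (if (i:ℕ) < s - 1 then b.1 i + (2 * (s - 1 - (i:ℕ)) - 1) else b.1 i - 1) :=
        congrFun (congrArg Prod.fst heq) i
      have := he1 i
      have := he1' i
      split_ifs at h <;> omega
    have hsnd : a.2 = b.2 := by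
      funext i
      have h : (if (i:ℕ) < s - 1 then a.2 i - (2 * (s - 1 - (i:ℕ)) - 1) else a.2 i + 1)
             = (if (i:ℕ) < s - 1 then b.2 i - (2 * (s - 1 - (i:ℕ)) - 1) else b.2 i + 1) :=
        congrFun (congrArg Prod.snd heq) i
      have := hoge i
      have := hoge' i
      split_ifs at h <;> omega
    exact Prod.ext hfst hsnd
  · -- SurjOn
    intro q hq
    obtain ⟨hSO, hAE, hOO, hEE, hltOE, hposE, hsumOE, hcond⟩ := hq
    have hOgap := odd_gap hSO hOO
    have hcond' : q.2 ⟨0, hfz⟩ + (2 * s - 3) ≤ q.1 ⟨s-1, hlst⟩ := hcond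
    have hObig : ∀ i : Fin s, q.2 ⟨0, hfz⟩ + (2 * s - 3) + 2 * ((s-1) - (i:ℕ)) ≤ q.1 i := by
      intro i
      have h1 : q.1 ⟨s-1, hlst⟩ + 2 * ((s-1) - (i:ℕ)) ≤ q.1 i :=
        hOgap i ⟨s-1, hlst⟩ (show (i:ℕ) ≤ s - 1 by have := i.isLt; omega)
      omega
    have hE2 : ∀ i : Fin s, 2 ≤ q.2 i := by
      intro i
      obtain ⟨c, hc⟩ := hEE i
      have := hposE i
      omega
    have hE0 : ∀ i : Fin s, q.2 i ≤ q.2 ⟨0, hfz⟩ := by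
      intro i
      exact hAE (show (⟨0, hfz⟩ : Fin s) ≤ i from Nat.zero_le _)
    have hOge : ∀ i : Fin s, 2 * (s - 1 - (i:ℕ)) - 1 < q.1 i := by
      intro i
      have h1 := hObig i
      have h2 := hposE ⟨0, hfz⟩
      omega
    refine ⟨(fun i => if (i:ℕ) < s - 1 then q.1 i - (2 * (s - 1 - (i:ℕ)) - 1) else q.1 i + 1,
             fun i => if (i:ℕ) < s - 1 then q.2 i + (2 * (s - 1 - (i:ℕ)) - 1) else q.2 i - 1),
            ⟨?_, ?_, ?_, ?_, ?_, ?_, ?_⟩, ?_⟩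
    · -- Antitone even parts (from q.1)
      intro i j hij
      have hij' : (i:ℕ) ≤ (j:ℕ) := hij
      have hg := hOgap i j hij'
      have h1 := hOge i
      have h2 := hOge j
      have hjlt := j.isLt
      show (if (j:ℕ) < s - 1 then q.1 j - (2 * (s - 1 - (j:ℕ)) - 1) else q.1 j + 1)
          ≤ (if (i:ℕ) < s - 1 then q.1 i - (2 * (s - 1 - (i:ℕ)) - 1) else q.1 i + 1)
      split_ifs <;> omega
    · -- StrictAnti odd parts (from q.2)
      intro i j hij
      have hij' : (i:ℕ) < (j:ℕ) := hij
      have hA : q.2 j ≤ q.2 i := hAE (le_of_lt hij)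
      have h2i := hE2 i
      have h2j := hE2 j
      have hjlt := j.isLt
      show (if (j:ℕ) < s - 1 then q.2 j + (2 * (s - 1 - (j:ℕ)) - 1) else q.2 j - 1)
          < (if (i:ℕ) < s - 1 then q.2 i + (2 * (s - 1 - (i:ℕ)) - 1) else q.2 i - 1)
      split_ifs <;> omega
    · -- Even
      intro i
      show Even (if (i:ℕ) < s - 1 then q.1 i - (2 * (s - 1 - (i:ℕ)) - 1) else q.1 i + 1)
      by_cases h : (i:ℕ) < s - 1
      · rw [if_pos h]
        obtain ⟨c, hc⟩ := hOO i
        have := hOge i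
        exact ⟨c + 1 - (s - 1 - (i:ℕ)), by omega⟩
      · rw [if_neg h]
        obtain ⟨c, hc⟩ := hOO i
        exact ⟨c + 1, by omega⟩
    · -- Odd
      intro i
      show Odd (if (i:ℕ) < s - 1 then q.2 i + (2 * (s - 1 - (i:ℕ)) - 1) else q.2 i - 1)
      by_cases h : (i:ℕ) < s - 1
      · rw [if_pos h]
        obtain ⟨c, hc⟩ := hEE i
        exact ⟨c + (s - 1 - (i:ℕ)) - 1, by omega⟩
      · rw [if_neg h]
        obtain ⟨c, hc⟩ := hEE i
        have := hE2 i
        exact ⟨c - 1, by omega⟩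
    · -- odd parts < even parts
      intro i j
      have h1 := hE0 j
      have h2 := hObig i
      have h3 := hE2 j
      have hilt := i.isLt
      have hjlt := j.isLt
      show (if (j:ℕ) < s - 1 then q.2 j + (2 * (s - 1 - (j:ℕ)) - 1) else q.2 j - 1)
          < (if (i:ℕ) < s - 1 then q.1 i - (2 * (s - 1 - (i:ℕ)) - 1) else q.1 i + 1)
      split_ifs <;> omega
    · -- positivity
      intro i
      show 0 < (if (i:ℕ) < s - 1 then q.2 i + (2 * (s - 1 - (i:ℕ)) - 1) else q.2 i - 1)
      split_ifs with h
      · have := hposE i; omega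
      · have := hE2 i; omega
    · -- sum
      have hpt : ∀ i : Fin s,
          (if (i:ℕ) < s - 1 then q.1 i - (2 * (s - 1 - (i:ℕ)) - 1) else q.1 i + 1) +
          (if (i:ℕ) < s - 1 then q.2 i + (2 * (s - 1 - (i:ℕ)) - 1) else q.2 i - 1)
          = q.1 i + q.2 i := by
        intro i
        by_cases h : (i:ℕ) < s - 1
        · rw [if_pos h, if_pos h]
          have := hOge i
          omega
        · rw [if_neg h, if_neg h]
          have := hE2 i
          omega
      show (∑ i : Fin s, if (i:ℕ) < s - 1 then q.1 i - (2 * (s - 1 - (i:ℕ)) - 1) else q.1 i + 1)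
          + (∑ i : Fin s, if (i:ℕ) < s - 1 then q.2 i + (2 * (s - 1 - (i:ℕ)) - 1) else q.2 i - 1)
          = n
      rw [← Finset.sum_add_distrib]
      simp only [hpt]
      rw [Finset.sum_add_distrib]
      exact hsumOE
    · -- f (preimage) = q
      refine Prod.ext ?_ ?_
      · funext i
        show (if (i:ℕ) < s - 1
              then (if (i:ℕ) < s - 1 then q.1 i - (2 * (s - 1 - (i:ℕ)) - 1) else q.1 i + 1)
                    + (2 * (s - 1 - (i:ℕ)) - 1)
              else (if (i:ℕ) < s - 1 then q.1 i - (2 * (s - 1 - (i:ℕ)) - 1) else q.1 i + 1) - 1)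
            = q.1 i
        by_cases h : (i:ℕ) < s - 1
        · rw [if_pos h, if_pos h]
          have := hOge i
          omega
        · rw [if_neg h, if_neg h]
          omega
      · funext i
        show (if (i:ℕ) < s - 1
              then (if (i:ℕ) < s - 1 then q.2 i + (2 * (s - 1 - (i:ℕ)) - 1) else q.2 i - 1)
                    - (2 * (s - 1 - (i:ℕ)) - 1)
              else (if (i:ℕ) < s - 1 then q.2 i + (2 * (s - 1 - (i:ℕ)) - 1) else q.2 i - 1) + 1)
            = q.2 i
        by_cases h : (i:ℕ) < s - 1
        · rw [if_pos h, if_pos h]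
          omega
        · rw [if_neg h, if_neg h]
          have := hE2 i
          omega
end

section
/- If λ is a partition of n with exactly one even part λ_1^e, odd parts λ_1^o > … > λ_t^o all distinct and less than λ_1^e, and λ_1^e − λ_1^o ≥ 3, then μ = (λ_1^e − 1, λ_1^o, …, λ_{t−1}^o, λ_t^o + 1) is a partition of n in which all odd parts are distinct and exceed the unique even part; moreover this correspondence is a bijection between such λ and the partitions of n counted by p_{eu}^{od} having exactly one even part and at least one odd part. -/
open List

def shiftEnds {α : Type*} [Inhabited α] (u v : α → α) (l : List α) : List α :=
  u l.head! :: (l.tail.dropLast ++ [v l.getLast!])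

theorem shiftEnds_cons_append {α : Type*} [Inhabited α] (u v : α → α) (x y : α) (m : List α) :
    shiftEnds u v (x :: (m ++ [y])) = u x :: (m ++ [v y]) := by
  simp [shiftEnds, getLast!_eq_getLast?_getD, getLast?_cons]

theorem Nat.add_two_le_of_odd_of_lt {x y : ℕ} (hx : Odd x) (hy : Odd y) (h : x < y) :
    x + 2 ≤ y := by
  obtain ⟨i, rfl⟩ := hx
  obtain ⟨j, rfl⟩ := hy
  omega

theorem List.IsChain.pairwise_add_two_le {l : List ℕ} (h : l.IsChain (· > ·))
    (hodd : ∀ x ∈ l, Odd x) : l.Pairwise (fun x y => y + 2 ≤ x) :=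
  (isChain_iff_pairwise.mp h).imp_of_mem fun hx hy hxy =>
    Nat.add_two_le_of_odd_of_lt (hodd _ hy) (hodd _ hx) hxy

def evenHeadLists (n : ℕ) : Set (List ℕ) :=
  {l | ∃ (E : ℕ) (os : List ℕ), l = E :: os ∧ os ≠ [] ∧
    Even E ∧ (∀ x ∈ os, Odd x) ∧ os.IsChain (· > ·) ∧
    (∀ x ∈ os, x < E) ∧ os.head! + 3 ≤ E ∧ (∀ x ∈ l, 0 < x) ∧ l.sum = n}

def evenLastLists (n : ℕ) : Set (List ℕ) :=
  {l | ∃ (os : List ℕ) (E : ℕ), l = os ++ [E] ∧ os ≠ [] ∧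
    (∀ x ∈ os, Odd x) ∧ os.IsChain (· > ·) ∧
    Even E ∧ 0 < E ∧ (∀ x ∈ os, E < x) ∧ l.sum = n}

theorem mapsTo_evenHeadLists (n : ℕ) :
    Set.MapsTo (shiftEnds (· - 1) (· + 1)) (evenHeadLists n) (evenLastLists n) := by
  rintro _ ⟨E, os, rfl, hne, hE, hodd, hchain, -, hhead, -, hsum⟩
  obtain ⟨a, b, rfl⟩ := (os.eq_nil_or_concat').resolve_left hne
  have hE1 : Odd (E - 1) := Nat.Even.sub_odd (by omega) hE odd_one
  have hchain' : ((E - 1) :: (a ++ [b])).IsChain (· > ·) := by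
    refine isChain_cons.mpr ⟨fun y hy => ?_, hchain⟩
    rw [head!_of_head? hy] at hhead
    omega
  rw [← cons_append] at hchain'
  have hodd' : ∀ x ∈ (E - 1) :: a ++ [b], Odd x := by
    simpa [or_imp, forall_and, hE1] using hodd
  have hgap := (pairwise_append.mp (hchain'.pairwise_add_two_le hodd')).2.2
  refine ⟨(E - 1) :: a, b + 1, by simp [shiftEnds_cons_append], cons_ne_nil _ _,
    fun x hx => hodd' x (mem_append_left _ hx), hchain'.left_of_append,
    (hodd b (by simp)).add_one, b.succ_pos,
    fun x hx => by have := hgap x hx b (mem_singleton_self b); omega, ?_⟩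
  simp only [shiftEnds_cons_append, sum_cons, sum_append] at hsum ⊢
  omega

theorem mapsTo_evenLastLists (n : ℕ) :
    Set.MapsTo (shiftEnds (· + 1) (· - 1)) (evenLastLists n) (evenHeadLists n) := by
  rintro _ ⟨os, E, rfl, hne, hodd, hchain, hE, hEpos, hgt, hsum⟩
  obtain ⟨c, d, rfl⟩ := exists_cons_of_ne_nil hne
  have hE1 : Odd (E - 1) := Nat.Even.sub_odd hEpos hE odd_one
  have hchain' : (c :: (d ++ [E - 1])).IsChain (· > ·) := by
    rw [← cons_append]
    refine hchain.append (isChain_singleton _) fun x hx y hy => ?_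
    have := hgt x (mem_of_getLast? hx)
    simp only [head?_cons, Option.mem_some_iff] at hy
    omega
  have hodd' : ∀ x ∈ c :: (d ++ [E - 1]), Odd x := by
    simpa [or_imp, forall_and, hE1] using hodd
  have hgap := (pairwise_cons.mp (hchain'.pairwise_add_two_le hodd')).1
  refine ⟨c + 1, d ++ [E - 1], by simp [shiftEnds_cons_append], by simp,
    (hodd c mem_cons_self).add_one, fun x hx => hodd' x (mem_cons_of_mem _ hx), hchain'.tail,
    fun x hx => by have := hgap x hx; omega,
    by have := hgap _ (head!_mem_self (by simp)); omega, ?_, ?_⟩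
  · simp only [cons_append, shiftEnds_cons_append, mem_cons]
    rintro x (rfl | hx)
    · exact c.succ_pos
    · exact (hodd' x (mem_cons_of_mem _ hx)).pos
  · simp only [cons_append, shiftEnds_cons_append, sum_cons, sum_append] at hsum ⊢
    omega

theorem invOn_shiftEnds (n : ℕ) :
    Set.InvOn (shiftEnds (· + 1) (· - 1)) (shiftEnds (· - 1) (· + 1))
      (evenHeadLists n) (evenLastLists n) := by
  constructor
  · rintro _ ⟨E, os, rfl, hne, -, -, -, -, -, hpos, -⟩
    obtain ⟨a, b, rfl⟩ := (os.eq_nil_or_concat').resolve_left hne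
    have := hpos E mem_cons_self
    simp only [shiftEnds_cons_append, Nat.add_sub_cancel]
    rw [Nat.sub_add_cancel this]
  · rintro _ ⟨os, E, rfl, hne, -, -, -, hEpos, -, -⟩
    obtain ⟨c, d, rfl⟩ := exists_cons_of_ne_nil hne
    simp only [cons_append, shiftEnds_cons_append, Nat.add_sub_cancel, Nat.sub_add_cancel hEpos]

theorem case_five_bijection (n : ℕ) :
    Set.BijOn
      (fun l : List ℕ => (l.head! - 1) :: (l.tail.dropLast ++ [l.getLast! + 1]))
      {l : List ℕ | ∃ (E : ℕ) (os : List ℕ), l = E :: os ∧ os ≠ [] ∧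
        Even E ∧ (∀ x ∈ os, Odd x) ∧ List.Chain' (· > ·) os ∧
        (∀ x ∈ os, x < E) ∧ os.head! + 3 ≤ E ∧ (∀ x ∈ l, 0 < x) ∧ l.sum = n}
      {l : List ℕ | ∃ (os : List ℕ) (E : ℕ), l = os ++ [E] ∧ os ≠ [] ∧
        (∀ x ∈ os, Odd x) ∧ List.Chain' (· > ·) os ∧
        Even E ∧ 0 < E ∧ (∀ x ∈ os, E < x) ∧ l.sum = n} :=
  (invOn_shiftEnds n).bijOn (mapsTo_evenHeadLists n) (mapsTo_evenLastLists n)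
end

section
/- If λ is a partition of n with s ≥ 3 even parts λ_1^e ≥ … ≥ λ_s^e, each greater than its unique odd part 1, then μ = (λ_1^e + 1, λ_2^e, …, λ_s^e) is a partition of n with exactly one odd part λ_1^e + 1 strictly greater than all even parts, and this correspondence is a bijection between such λ of size n and partitions of n counted by p_{eu}^{od} with exactly one odd part and at least two even parts, for n ≥ 7. -/
namespace Multiset

theorem exists_eq_cons_of_forall_le {α : Type*} [LinearOrder α] {s : Multiset α} (hs : s ≠ 0) :
    ∃ m R, s = m ::ₘ R ∧ ∀ e ∈ R, e ≤ m := by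
  obtain ⟨m, hm, hmax⟩ := s.exists_max_image id hs
  exact ⟨m, s.erase m, (cons_erase hm).symm, fun e he => hmax e (mem_of_mem_erase he)⟩

theorem sup_cons_of_forall_le {α : Type*} [SemilatticeSup α] [OrderBot α] {m : α}
    {R : Multiset α} (hR : ∀ e ∈ R, e ≤ m) : (m ::ₘ R).sup = m :=
  (sup_cons m R).trans (sup_eq_left.2 (Multiset.sup_le.2 hR))

theorem bijOn_erase_image_cons {α : Type*} [DecidableEq α] (a : α) (S : Set (Multiset α)) :
    Set.BijOn (·.erase a) ((a ::ₘ ·) '' S) S := by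
  refine Set.InvOn.bijOn (f' := (a ::ₘ ·)) ⟨?_, fun N _ => erase_cons_head a N⟩ ?_ ?_
  · rintro _ ⟨N, -, rfl⟩
    simp only [erase_cons_head]
  · rintro _ ⟨N, hN, rfl⟩
    simpa only [erase_cons_head] using hN
  · exact Set.mapsTo_image _ S

end Multiset

open Multiset

def succLargest (s : Multiset ℕ) : Multiset ℕ := (s.sup + 1) ::ₘ s.erase s.sup

def predLargest (s : Multiset ℕ) : Multiset ℕ := (s.sup - 1) ::ₘ s.erase s.sup

theorem succLargest_cons {m : ℕ} {R : Multiset ℕ} (hR : ∀ e ∈ R, e ≤ m) :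
    succLargest (m ::ₘ R) = (m + 1) ::ₘ R := by
  rw [succLargest, sup_cons_of_forall_le hR, erase_cons_head]

theorem predLargest_cons {m : ℕ} {R : Multiset ℕ} (hR : ∀ e ∈ R, e ≤ m) :
    predLargest (m ::ₘ R) = (m - 1) ::ₘ R := by
  rw [predLargest, sup_cons_of_forall_le hR, erase_cons_head]

def oneAndEvenParts (n : ℕ) : Set (Multiset ℕ) :=
  {M : Multiset ℕ | M.sum = n ∧ M.count 1 = 1 ∧
    (∀ x ∈ M, x ≠ 1 → Even x) ∧ 3 ≤ (M.filter (fun x => Even x)).card ∧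
    (∀ x ∈ M, 1 < x ∨ x = 1)}

def evenParts (n : ℕ) : Set (Multiset ℕ) :=
  {N : Multiset ℕ | N.sum + 1 = n ∧ 3 ≤ N.card ∧ ∀ x ∈ N, Even x ∧ 0 < x}

def oddAboveEvenParts (n : ℕ) : Set (Multiset ℕ) :=
  {M : Multiset ℕ | M.sum = n ∧ (M.filter (fun x => Odd x)).card = 1 ∧
    2 ≤ (M.filter (fun x => Even x)).card ∧ OddDistinctGtEven M ∧
    (∀ x ∈ M, 0 < x)}

theorem cons_one_mem_oneAndEvenParts_iff {n : ℕ} {N : Multiset ℕ} :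
    1 ::ₘ N ∈ oneAndEvenParts n ↔ N ∈ evenParts n := by
  simp only [oneAndEvenParts, evenParts, Set.mem_ofPred_eq, sum_cons, count_cons_self,
    forall_mem_cons, filter_cons_of_neg _ Nat.not_even_one]
  constructor
  · rintro ⟨hsum, hcount, ⟨-, heven⟩, hcard, -, hpos⟩
    have hne : ∀ x ∈ N, x ≠ 1 := by
      rintro x hx rfl
      have := count_pos.2 hx
      omega
    refine ⟨by omega, hcard.trans (card_le_card (filter_le _ _)), fun x hx => ?_⟩
    exact ⟨heven x hx (hne x hx), by have := hpos x hx; omega⟩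
  · rintro ⟨hsum, hcard, hN⟩
    have h1 : 1 ∉ N := fun h => Nat.not_even_one (hN 1 h).1
    rw [filter_eq_self.2 fun x hx => (hN x hx).1, count_eq_zero.2 h1]
    refine ⟨by omega, rfl, ⟨absurd rfl, fun x hx _ => (hN x hx).1⟩, hcard, Or.inr trivial,
      fun x hx => ?_⟩
    have := hN x hx
    omega

theorem oneAndEvenParts_eq_image (n : ℕ) :
    oneAndEvenParts n = (1 ::ₘ ·) '' evenParts n := by
  ext M
  refine ⟨fun hM => ?_, ?_⟩
  · have h1 : 1 ∈ M := count_pos.1 (by rw [hM.2.1]; exact Nat.one_pos)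
    obtain ⟨N, rfl⟩ := exists_cons_of_mem h1
    exact ⟨N, cons_one_mem_oneAndEvenParts_iff.1 hM, rfl⟩
  · rintro ⟨N, hN, rfl⟩
    exact cons_one_mem_oneAndEvenParts_iff.2 hN

theorem bijOn_erase_one (n : ℕ) :
    Set.BijOn (·.erase 1) (oneAndEvenParts n) (evenParts n) :=
  oneAndEvenParts_eq_image n ▸ bijOn_erase_image_cons 1 (evenParts n)

theorem cons_mem_oddAboveEvenParts_iff {n o : ℕ} {R : Multiset ℕ} (ho : Odd o)
    (hR : ∀ e ∈ R, Even e) :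
    o ::ₘ R ∈ oddAboveEvenParts n ↔ o + R.sum = n ∧ 2 ≤ R.card ∧ ∀ e ∈ R, 0 < e ∧ e < o := by
  have hodd : R.filter (fun x => Odd x) = 0 :=
    filter_eq_nil.2 fun e he => Nat.not_odd_iff_even.2 (hR e he)
  have heven : R.filter (fun x => Even x) = R := filter_eq_self.2 hR
  simp only [oddAboveEvenParts, OddDistinctGtEven, Set.mem_ofPred_eq, sum_cons,
    filter_cons_of_pos _ ho, filter_cons_of_neg _ (Nat.not_even_iff_odd.2 ho), hodd, heven,
    forall_mem_cons]
  constructor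
  · rintro ⟨hsum, -, hcard, ⟨-, hlt, -⟩, -, hpos⟩
    exact ⟨hsum, hcard, fun e he => ⟨hpos e he, (hlt ho).2 e he (hR e he)⟩⟩
  · rintro ⟨hsum, hcard, hR'⟩
    have ho' : ¬Even o := Nat.not_even_iff_odd.2 ho
    refine ⟨hsum, rfl, hcard, ⟨nodup_singleton o, fun _ => ⟨(absurd · ho'), ?_⟩, ?_⟩,
      ho.pos, fun e he => (hR' e he).1⟩
    · exact fun e he _ => (hR' e he).2
    · exact fun e he he' => absurd (hR e he) (Nat.not_even_iff_odd.2 he')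

theorem exists_eq_cons_of_mem_oddAboveEvenParts {n : ℕ} {μ : Multiset ℕ}
    (hμ : μ ∈ oddAboveEvenParts n) : ∃ o R, μ = o ::ₘ R ∧ Odd o ∧ ∀ e ∈ R, Even e := by
  obtain ⟨o, ho⟩ := card_eq_one.1 hμ.2.1
  refine ⟨o, μ.filter (fun x => ¬Odd x), ?_, ?_, ?_⟩
  · rw [← singleton_add, ← ho, filter_add_not]
  · have : o ∈ μ.filter (fun x => Odd x) := ho ▸ mem_singleton_self o
    exact (mem_filter.1 this).2
  · intro e he
    exact Nat.not_odd_iff_even.1 (mem_filter.1 he).2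

theorem exists_eq_cons_of_mem_evenParts {n : ℕ} {N : Multiset ℕ} (hN : N ∈ evenParts n) :
    ∃ m R, N = m ::ₘ R ∧ ∀ e ∈ R, e ≤ m :=
  exists_eq_cons_of_forall_le (card_pos.1 (by have := hN.2.1; omega))

theorem mapsTo_succLargest (n : ℕ) :
    Set.MapsTo succLargest (evenParts n) (oddAboveEvenParts n) := by
  intro N hN
  obtain ⟨m, R, rfl, hR⟩ := exists_eq_cons_of_mem_evenParts hN
  obtain ⟨hsum, hcard, hpos⟩ := hN
  simp only [sum_cons, card_cons, forall_mem_cons] at hsum hcard hpos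
  rw [succLargest_cons hR]
  refine (cons_mem_oddAboveEvenParts_iff hpos.1.1.add_one fun e he => (hpos.2 e he).1).2
    ⟨by omega, by omega, fun e he => ⟨(hpos.2 e he).2, Nat.lt_succ_of_le (hR e he)⟩⟩

theorem mapsTo_predLargest (n : ℕ) :
    Set.MapsTo predLargest (oddAboveEvenParts n) (evenParts n) := by
  intro μ hμ
  obtain ⟨o, R, rfl, ho, hR⟩ := exists_eq_cons_of_mem_oddAboveEvenParts hμ
  obtain ⟨hsum, hcard, hlt⟩ := (cons_mem_oddAboveEvenParts_iff ho hR).1 hμ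
  rw [predLargest_cons fun e he => (hlt e he).2.le]
  obtain ⟨e, he⟩ := card_pos_iff_exists_mem.1 (by omega : 0 < R.card)
  have ho3 : 3 ≤ o := by
    obtain ⟨k, rfl⟩ := ho
    obtain ⟨j, rfl⟩ := hR e he
    have := hlt _ he
    omega
  refine ⟨by rw [sum_cons]; omega, by rw [card_cons]; omega, forall_mem_cons.2 ⟨?_, ?_⟩⟩
  · exact ⟨Nat.Odd.sub_odd ho odd_one, by omega⟩
  · exact fun x hx => ⟨hR x hx, (hlt x hx).1⟩

theorem bijOn_succLargest (n : ℕ) :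
    Set.BijOn succLargest (evenParts n) (oddAboveEvenParts n) := by
  refine Set.InvOn.bijOn (f' := predLargest) ⟨?_, ?_⟩ (mapsTo_succLargest n)
    (mapsTo_predLargest n)
  · intro N hN
    obtain ⟨m, R, rfl, hR⟩ := exists_eq_cons_of_mem_evenParts hN
    rw [succLargest_cons hR, predLargest_cons fun e he => Nat.le_add_right_of_le (hR e he),
      Nat.add_sub_cancel]
  · intro μ hμ
    obtain ⟨o, R, rfl, ho, hR⟩ := exists_eq_cons_of_mem_oddAboveEvenParts hμ
    have hlt := ((cons_mem_oddAboveEvenParts_iff ho hR).1 hμ).2.2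
    rw [predLargest_cons fun e he => (hlt e he).2.le,
      succLargest_cons fun e he => Nat.le_sub_one_of_lt (hlt e he).2, Nat.sub_add_cancel ho.pos]

theorem case_eleven_bijection_general (n : ℕ) :
    Set.BijOn
      (fun M : Multiset ℕ =>
        ((M.erase 1).sup + 1) ::ₘ ((M.erase 1).erase ((M.erase 1).sup)))
      {M : Multiset ℕ | M.sum = n ∧ M.count 1 = 1 ∧
        (∀ x ∈ M, x ≠ 1 → Even x) ∧ 3 ≤ (M.filter (fun x => Even x)).card ∧
        (∀ x ∈ M, 1 < x ∨ x = 1)}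
      {M : Multiset ℕ | M.sum = n ∧ (M.filter (fun x => Odd x)).card = 1 ∧
        2 ≤ (M.filter (fun x => Even x)).card ∧ OddDistinctGtEven M ∧
        (∀ x ∈ M, 0 < x)} := by
  exact (bijOn_succLargest n).comp (bijOn_erase_one n)

theorem case_eleven_bijection (n : ℕ) (hn : 7 ≤ n) :
    Set.BijOn
      (fun M : Multiset ℕ =>
        ((M.erase 1).sup + 1) ::ₘ ((M.erase 1).erase ((M.erase 1).sup)))
      {M : Multiset ℕ | M.sum = n ∧ M.count 1 = 1 ∧
        (∀ x ∈ M, x ≠ 1 → Even x) ∧ 3 ≤ (M.filter (fun x => Even x)).card ∧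
        (∀ x ∈ M, 1 < x ∨ x = 1)}
      {M : Multiset ℕ | M.sum = n ∧ (M.filter (fun x => Odd x)).card = 1 ∧
        2 ≤ (M.filter (fun x => Even x)).card ∧ OddDistinctGtEven M ∧
        (∀ x ∈ M, 0 < x)} :=
  case_eleven_bijection_general n
end
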